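/- Let N ∈ 𝒩 and let Σ(N) be the lattice of joins of subsets of N. Then N is a building set of Σ(N): for every x ∈ Σ(N) with max N_{≤x} = {x₁,...,x_ℓ}, the map (a₁,...,a_ℓ) ↦ a₁ ∨ ... ∨ a_ℓ is a poset isomorphism from the product of intervals [0̂, x₁] × ... × [0̂, x_ℓ] in Σ(N) to the interval [0̂, x] in Σ(N). -/

import Mathlib

open Classical Set
noncomputable section

/-- The partition of `Fin m` whose only (possibly) non-singleton block is `B`. -/
def blockSetoid {m : ℕ} (B : Set (Fin m)) : Setoid (Fin m) :=
  ⟨fun x y => x = y ∨ (x ∈ B ∧ y ∈ B), by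
    refine ⟨fun x => Or.inl rfl, ?_, ?_⟩
    · rintro x y (h | h)
      · exact Or.inl h.symm
      · exact Or.inr ⟨h.2, h.1⟩
    · rintro x y z (h1 | h1) (h2 | h2)
      · exact Or.inl (h1.trans h2)
      · subst h1; exact Or.inr h2
      · subst h2; exact Or.inr h1
      · exact Or.inr ⟨h1.1, h2.2⟩⟩

/-- `Π^(k)_m`: partitions of `{1,…,m}` all of whose blocks have size ≡ 1 (mod k). -/
def Pik (k m : ℕ) : Set (Setoid (Fin m)) :=
  {s | ∀ c ∈ s.classes, c.ncard ≡ 1 [MOD k]}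

/-- `I`: partitions with exactly one non-singleton block (the minimal building set of `Π_m`). -/
def BSI (m : ℕ) : Set (Setoid (Fin m)) :=
  {s | ∃ B : Set (Fin m), 2 ≤ B.ncard ∧ s = blockSetoid B}

/-- `G`: partitions with exactly one non-singleton block, of size ≡ 1 (mod k). -/
def BSG (k m : ℕ) : Set (Setoid (Fin m)) :=
  {s | ∃ B : Set (Fin m), 2 ≤ B.ncard ∧ B.ncard ≡ 1 [MOD k] ∧ s = blockSetoid B}

/-- `z` is a minimal upper bound of the set `A` within the subposet `P`. -/
def IsMinUB {L : Type*} [PartialOrder L] (P : Set L) (A : Set L) (z : L) : Prop :=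
  z ∈ P ∧ (∀ a ∈ A, a ≤ z) ∧ ∀ w ∈ P, (∀ a ∈ A, a ≤ w) → w ≤ z → w = z

/-- Maximal elements of `S` lying below `x`. -/
def maxBelow {L : Type*} [PartialOrder L] (S : Set L) (x : L) : Set L :=
  {g ∈ S | g ≤ x ∧ ∀ g' ∈ S, g' ≤ x → g ≤ g' → g = g'}

/-- The support of a partition: union of its non-singleton blocks. -/
def suppPart {m : ℕ} (s : Setoid (Fin m)) : Set (Fin m) :=
  {x | ∃ y, x ≠ y ∧ s x y}

/-- Membership in the family of faces of the complex of k-trees: `N ⊆ G` and every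
antichain in `N` of size at least two has a unique minimal upper bound in `Pik k m`,
which moreover does not lie in `G`. -/
def memN (k m : ℕ) (N : Set (Setoid (Fin m))) : Prop :=
  N ⊆ BSG k m ∧ ∀ S : Finset (Setoid (Fin m)), ↑S ⊆ N → 2 ≤ S.card →
    (∀ a ∈ S, ∀ b ∈ S, a ≠ b → ¬ a ≤ b) →
    (∃! z, IsMinUB (Pik k m) ↑S z) ∧
      ∀ z, IsMinUB (Pik k m) ↑S z → z ∉ BSG k m

/-- `Σ(N)`: the set of all (unique minimal-upper-bound) joins of subsets of `N` inside
`Pik k m`; the empty join yields the minimal element. -/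
def SigmaSet (k m : ℕ) (N : Set (Setoid (Fin m))) : Set (Setoid (Fin m)) :=
  {a | ∃ X ⊆ N, IsMinUB (Pik k m) X a}


/-! The defining property of `𝒩` forces the supports of the members of `N` to be laminar: two
overlapping, non-nested blocks would have as a minimal upper bound a smallest admissible block
containing both, which lies in `G`. For a laminar family of one-block partitions the union of
the relations is already transitive, so the join of any subfamily has the maximal blocks as its
classes and lies in `Π^(k)_m`; hence `Σ(N)` consists exactly of the joins of subsets of `N`.
Meeting such a join with a maximal element `z` of `N` below `x` keeps exactly the members below
`z`, so taking joins and taking meets with the `z`'s are mutually inverse monotone maps. -/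

instance {α : Type*} [Finite α] : Finite (Setoid α) :=
  Finite.of_injective (fun s : Setoid α => s.r) fun _ _ h =>
    Setoid.ext fun a b => Iff.of_eq (congrFun₂ h a b)

section CompleteLattice

variable {L : Type*} [CompleteLattice L]

lemma IsMinUB.sSup_eq {P X : Set L} {z : L} (hz : IsMinUB P X z) (hX : sSup X ∈ P) :
    sSup X = z :=
  hz.2.2 _ hX (fun _ => le_sSup) (sSup_le hz.2.1)

lemma isMinUB_sSup {P X : Set L} (hX : sSup X ∈ P) : IsMinUB P X (sSup X) :=
  ⟨hX, fun _ => le_sSup, fun _ _ hw hle => le_antisymm hle (sSup_le hw)⟩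

lemma exists_sSup_eq_iSup {N : Set L} {ι : Type*} {f : ι → L}
    (hf : ∀ i, ∃ X ⊆ N, sSup X = f i) : ∃ X ⊆ N, sSup X = ⨆ i, f i := by
  choose X hXN hX using hf
  exact ⟨⋃ i, X i, iUnion_subset hXN, by simp_rw [sSup_iUnion, hX]⟩

lemma exists_le_mem_maxBelow [Finite L] {S : Set L} {a x : L} (ha : a ∈ S) (hax : a ≤ x) :
    ∃ z ∈ maxBelow S x, a ≤ z := by
  obtain ⟨z, haz, hz⟩ := Finite.exists_le_maximal (p := fun g => g ∈ S ∧ g ≤ x) ⟨ha, hax⟩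
  exact ⟨z, ⟨hz.prop.1, hz.prop.2, fun g hg hgx hzg => hzg.antisymm (hz.2 ⟨hg, hgx⟩ hzg)⟩, haz⟩

lemma iSup_sSup_inf_eq [Finite L] {N X : Set L} (hX : X ⊆ N) {x : L} (hXx : sSup X ≤ x)
    {ι : Type*} {z : ι → L} (hz : ∀ w ∈ maxBelow N x, ∃ i, z i = w) :
    ⨆ i, sSup X ⊓ z i = sSup X := by
  refine le_antisymm (iSup_le fun _ => inf_le_left) (sSup_le fun a ha => ?_)
  obtain ⟨w, hw, haw⟩ := exists_le_mem_maxBelow (hX ha) ((le_sSup ha).trans hXx)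
  obtain ⟨i, rfl⟩ := hz w hw
  exact le_iSup_of_le i (le_inf (le_sSup ha) haw)

theorem exists_orderIso_pi_Icc_of_iSup_inf {S : Set L} (hbot : ⊥ ∈ S) {ι : Type*} (z : ι → S) (x : S) (hzx : ∀ i, z i ≤ x)
    (hsup_mem : ∀ f : ι → L, (∀ i, f i ∈ S) → ⨆ i, f i ∈ S)
    (hsup_inf : ∀ f : ι → L, (∀ i, f i ∈ S) → (∀ i, f i ≤ z i) → ∀ i, (⨆ j, f j) ⊓ z i = f i)
    (hinf_mem : ∀ y ∈ S, y ≤ x → ∀ i, y ⊓ z i ∈ S)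
    (hsup_inf_self : ∀ y ∈ S, y ≤ x → ⨆ i, y ⊓ z i = y) :
    ∃ φ : ((i : ι) → Icc (⟨⊥, hbot⟩ : S) (z i)) ≃o Icc (⟨⊥, hbot⟩ : S) x,
      ∀ f, ((φ f : S) : L) = sSup (range fun i => ((f i : S) : L)) := by
  let F : ((i : ι) → Icc (⟨⊥, hbot⟩ : S) (z i)) → Icc (⟨⊥, hbot⟩ : S) x := fun f =>
    ⟨⟨⨆ i, ((f i : S) : L), hsup_mem _ fun i => (f i : S).2⟩,
      bot_le (a := (_ : L)), iSup_le fun i => (f i).2.2.trans (hzx i)⟩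
  let G : Icc (⟨⊥, hbot⟩ : S) x → (i : ι) → Icc (⟨⊥, hbot⟩ : S) (z i) := fun y i =>
    ⟨⟨(y : L) ⊓ z i, hinf_mem _ (y : S).2 y.2.2 i⟩, bot_le (a := (_ : L)), inf_le_right⟩
  have hGF : ∀ f, G (F f) = f := fun f => funext fun i => Subtype.ext <| Subtype.ext <|
    hsup_inf _ (fun j => (f j : S).2) (fun j => (f j).2.2) i
  have hFG : ∀ y, F (G y) = y := fun y => Subtype.ext <| Subtype.ext <|
    hsup_inf_self _ (y : S).2 y.2.2
  refine ⟨Equiv.toOrderIso ⟨F, G, hGF, hFG⟩ (fun f g hfg => ?_) (fun y y' hyy' i => ?_),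
    fun f => rfl⟩
  · exact iSup_mono fun i => hfg i
  · exact inf_le_inf_right _ hyy'

end CompleteLattice

variable {k m : ℕ}

lemma mem_suppPart_of_rel {s : Setoid (Fin m)} {p q : Fin m} (h : s p q) (hpq : p ≠ q) :
    p ∈ suppPart s :=
  ⟨q, hpq, h⟩

lemma suppPart_mono {s t : Setoid (Fin m)} (h : s ≤ t) : suppPart s ⊆ suppPart t :=
  fun _ ⟨q, hpq, hs⟩ => ⟨q, hpq, h hs⟩

lemma blockSetoid_mono {B C : Set (Fin m)} (h : B ⊆ C) : blockSetoid B ≤ blockSetoid C := by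
  rintro p q (rfl | ⟨hp, hq⟩)
  exacts [Or.inl rfl, Or.inr ⟨h hp, h hq⟩]

lemma suppPart_blockSetoid {B : Set (Fin m)} (hB : 2 ≤ B.ncard) : suppPart (blockSetoid B) = B := by
  refine Subset.antisymm ?_ fun p hp => ?_
  · rintro p ⟨q, hpq, rfl | ⟨hp, -⟩⟩
    exacts [absurd rfl hpq, hp]
  · obtain ⟨q, hq, hqp⟩ := exists_ne_of_one_lt_ncard hB p
    exact ⟨q, hqp.symm, Or.inr ⟨hp, hq⟩⟩

lemma setOf_blockSetoid_eq {B : Set (Fin m)} {y : Fin m} (hy : y ∈ B) :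
    {p | blockSetoid B p y} = B := by
  ext p
  exact ⟨by rintro (rfl | ⟨hp, -⟩) <;> assumption, fun hp => Or.inr ⟨hp, hy⟩⟩

lemma blockSetoid_mem_Pik {B : Set (Fin m)} (hB : B.ncard ≡ 1 [MOD k]) :
    blockSetoid B ∈ Pik k m := by
  rintro c ⟨y, rfl⟩
  by_cases hy : y ∈ B
  · rwa [setOf_blockSetoid_eq hy]
  · have : {p | blockSetoid B p y} = {y} := by
      ext p
      exact ⟨by rintro (rfl | ⟨-, hy'⟩); exacts [rfl, absurd hy' hy], fun hp => Or.inl hp⟩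
    rw [this, ncard_singleton]

lemma eq_blockSetoid_suppPart_of_mem_BSG {a : Setoid (Fin m)} (ha : a ∈ BSG k m) :
    a = blockSetoid (suppPart a) ∧ (suppPart a).ncard ≡ 1 [MOD k] := by
  obtain ⟨B, hB2, hB1, rfl⟩ := ha
  rw [suppPart_blockSetoid hB2]
  exact ⟨rfl, hB1⟩

-- For one-block partitions `a ≤ b ↔ suppPart a ⊆ suppPart b`, so this is the usual
-- nested-or-disjoint condition on the blocks.
def IsLaminar (N : Set (Setoid (Fin m))) : Prop :=
  ∀ a ∈ N, ∀ b ∈ N, ¬Disjoint (suppPart a) (suppPart b) → a ≤ b ∨ b ≤ a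

lemma IsLaminar.mono {N X : Set (Setoid (Fin m))} (hN : IsLaminar N) (hX : X ⊆ N) :
    IsLaminar X :=
  fun a ha b hb => hN a (hX ha) b (hX hb)

-- `C` is inclusion-minimal among the admissible supersets of `U`: the class of `x₀` in an upper
-- bound of `S` below `blockSetoid C` is squeezed between `U` and `C`.
lemma exists_isMinUB_blockSetoid {S : Set (Setoid (Fin m))} {U : Set (Fin m)} {x₀ : Fin m}
    (hx₀ : x₀ ∈ U) (hS : ∀ s ∈ S, s ≤ blockSetoid U)
    (hU : ∀ w : Setoid (Fin m), (∀ s ∈ S, s ≤ w) → U ⊆ {p | w p x₀})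
    {z : Setoid (Fin m)} (hz : z ∈ Pik k m) (hzS : ∀ s ∈ S, s ≤ z) :
    ∃ C, U ⊆ C ∧ C.ncard ≡ 1 [MOD k] ∧ IsMinUB (Pik k m) S (blockSetoid C) := by
  obtain ⟨C, -, hC⟩ := Finite.exists_le_minimal
    (p := fun C : Set (Fin m) => U ⊆ C ∧ C.ncard ≡ 1 [MOD k]) (a := {p | z p x₀})
    ⟨hU z hzS, hz _ (z.mem_classes x₀)⟩
  refine ⟨C, hC.prop.1, hC.prop.2, blockSetoid_mem_Pik hC.prop.2,
    fun s hs => (hS s hs).trans (blockSetoid_mono hC.prop.1), fun w hw hwS hwC => ?_⟩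
  have hclass : {p | w p x₀} = C := by
    refine hC.eq_of_le ⟨hU w hwS, hw _ (w.mem_classes x₀)⟩ fun p hp => ?_
    rcases hwC hp with rfl | ⟨hp, -⟩
    exacts [hC.prop.1 hx₀, hp]
  refine le_antisymm hwC ?_
  rintro p q (rfl | ⟨hp, hq⟩)
  · exact w.refl' p
  · rw [← hclass] at hp hq
    exact w.trans' hp (w.symm' hq)

theorem isLaminar_of_memN {N : Set (Setoid (Fin m))} (hN : memN k m N) : IsLaminar N := by
  intro a ha b hb hab
  by_contra! hcomp
  have hne : a ≠ b := fun h => hcomp.1 h.le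
  obtain ⟨⟨z, hz, -⟩, hnotG⟩ := hN.2 {a, b}
    (by simp [Finset.coe_insert, insert_subset_iff, ha, hb]) (Finset.card_pair hne).ge
    (by simp only [Finset.mem_insert, Finset.mem_singleton]
        rintro u (rfl | rfl) v (rfl | rfl) huv <;> simp_all)
  obtain ⟨B, hB2, -, rfl⟩ := hN.1 ha
  obtain ⟨B', hB'2, -, rfl⟩ := hN.1 hb
  rw [suppPart_blockSetoid hB2, suppPart_blockSetoid hB'2] at hab
  obtain ⟨x₀, hx₀B, hx₀B'⟩ := not_disjoint_iff.1 hab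
  obtain ⟨C, hBC, hC1, hCmin⟩ := exists_isMinUB_blockSetoid (U := B ∪ B') (Or.inl hx₀B)
    (by simpa using ⟨blockSetoid_mono subset_union_left, blockSetoid_mono subset_union_right⟩)
    (fun w hw => by
      rintro p (hp | hp)
      exacts [hw (blockSetoid B) (by simp) (Or.inr ⟨hp, hx₀B⟩),
        hw (blockSetoid B') (by simp) (Or.inr ⟨hp, hx₀B'⟩)])
    hz.1 hz.2.1
  exact hnotG _ hCmin ⟨C, hB2.trans (ncard_le_ncard (subset_union_left.trans hBC)), hC1, rfl⟩

section Join

variable {X : Set (Setoid (Fin m))}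

lemma IsLaminar.equivalence (hX : IsLaminar X) :
    Equivalence fun p q : Fin m => p = q ∨ ∃ a ∈ X, a p q where
  refl _ := Or.inl rfl
  symm := by
    rintro p q (rfl | ⟨a, ha, h⟩)
    exacts [Or.inl rfl, Or.inr ⟨a, ha, a.symm' h⟩]
  trans := by
    rintro p q r (rfl | ⟨a, ha, hpq⟩) (rfl | ⟨b, hb, hqr⟩)
    · exact Or.inl rfl
    · exact Or.inr ⟨b, hb, hqr⟩
    · exact Or.inr ⟨a, ha, hpq⟩
    rcases eq_or_ne p q with rfl | hpq'
    · exact Or.inr ⟨b, hb, hqr⟩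
    rcases eq_or_ne q r with rfl | hqr'
    · exact Or.inr ⟨a, ha, hpq⟩
    have hmeet : ¬Disjoint (suppPart a) (suppPart b) :=
      not_disjoint_iff.2 ⟨q, mem_suppPart_of_rel (a.symm' hpq) hpq'.symm,
        mem_suppPart_of_rel hqr hqr'⟩
    rcases hX a ha b hb hmeet with hab | hba
    · exact Or.inr ⟨b, hb, b.trans' (hab hpq) hqr⟩
    · exact Or.inr ⟨a, ha, a.trans' hpq (hba hqr)⟩

/-- Laminarity makes the union of the relations in `X` transitive already, so no chains are
needed to describe the join. -/
lemma IsLaminar.rel_sSup_iff (hX : IsLaminar X) {p q : Fin m} :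
    sSup X p q ↔ p = q ∨ ∃ a ∈ X, a p q := by
  rw [Setoid.sSup_eq_eqvGen]
  refine ⟨fun h => hX.equivalence.eqvGen_iff.1 (Relation.EqvGen.mono (fun _ _ => Or.inr) _ _ h), ?_⟩
  rintro (rfl | h)
  exacts [Relation.EqvGen.refl p, Relation.EqvGen.rel _ _ h]

lemma IsLaminar.sSup_mem_Pik (hX : IsLaminar X) (hXG : X ⊆ BSG k m) : sSup X ∈ Pik k m := by
  rintro c ⟨y, rfl⟩
  by_cases hy : ∃ a ∈ X, y ∈ suppPart a
  · obtain ⟨a, haX, hya⟩ := hy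
    obtain ⟨b, -, hb⟩ := Finite.exists_le_maximal (p := fun b => b ∈ X ∧ y ∈ suppPart b)
      (a := a) ⟨haX, hya⟩
    obtain ⟨hbX, hyb⟩ := hb.prop
    obtain ⟨hb_eq, hb1⟩ := eq_blockSetoid_suppPart_of_mem_BSG (hXG hbX)
    suffices {p | sSup X p y} = suppPart b by rwa [this]
    ext p
    rw [mem_ofPred_eq, hX.rel_sSup_iff]
    refine ⟨?_, fun hp => Or.inr ⟨b, hbX, hb_eq ▸ Or.inr ⟨hp, hyb⟩⟩⟩
    rintro (rfl | ⟨a, haX, hpy⟩)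
    · exact hyb
    rcases eq_or_ne p y with rfl | hpy'
    · exact hyb
    have hya : y ∈ suppPart a := mem_suppPart_of_rel (a.symm' hpy) hpy'.symm
    have hab : a ≤ b := (hX a haX b hbX (not_disjoint_iff.2 ⟨y, hya, hyb⟩)).elim id
      fun hba => hb.2 ⟨haX, hya⟩ hba
    exact mem_suppPart_of_rel (hab hpy) hpy'
  · suffices {p | sSup X p y} = {y} by rw [this, ncard_singleton]
    ext p
    rw [mem_ofPred_eq, hX.rel_sSup_iff, mem_singleton_iff]
    refine ⟨?_, Or.inl⟩
    rintro (rfl | ⟨a, haX, hpy⟩)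
    · rfl
    by_contra hpy'
    exact hy ⟨a, haX, mem_suppPart_of_rel (a.symm' hpy) (Ne.symm hpy')⟩

lemma IsLaminar.sSup_inf_le (hX : IsLaminar X) (z : Setoid (Fin m)) :
    sSup X ⊓ z ≤ sSup {a ∈ X | ¬Disjoint (suppPart a) (suppPart z)} := by
  rintro p q ⟨hpX, hpz⟩
  rcases eq_or_ne p q with rfl | hpq
  · exact Setoid.refl' _ p
  obtain ⟨a, haX, hapq⟩ := (hX.rel_sSup_iff.1 hpX).resolve_left hpq
  have ha : a ∈ {a ∈ X | ¬Disjoint (suppPart a) (suppPart z)} :=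
    ⟨haX, not_disjoint_iff.2 ⟨p, mem_suppPart_of_rel hapq hpq, mem_suppPart_of_rel hpz hpq⟩⟩
  exact le_sSup ha hapq

end Join

section Laminar

variable {N : Set (Setoid (Fin m))} {x : Setoid (Fin m)}

lemma mem_SigmaSet_iff (hNG : N ⊆ BSG k m) (hN : IsLaminar N) {a : Setoid (Fin m)} :
    a ∈ SigmaSet k m N ↔ ∃ X ⊆ N, sSup X = a := by
  refine exists_congr fun X => and_congr_right fun hX => ?_
  have hPik := (hN.mono hX).sSup_mem_Pik (hX.trans hNG)
  exact ⟨fun ha => ha.sSup_eq hPik, fun ha => ha ▸ isMinUB_sSup hPik⟩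

lemma IsLaminar.le_of_mem_maxBelow (hN : IsLaminar N) {a z : Setoid (Fin m)} (ha : a ∈ N)
    (hax : a ≤ x) (hz : z ∈ maxBelow N x) (h : ¬Disjoint (suppPart a) (suppPart z)) : a ≤ z :=
  (hN a ha z hz.1 h).elim id fun hza => (hz.2.2 a ha hax hza).ge

lemma IsLaminar.eq_of_mem_maxBelow (hN : IsLaminar N) {z z' : Setoid (Fin m)}
    (hz : z ∈ maxBelow N x) (hz' : z' ∈ maxBelow N x)
    (h : ¬Disjoint (suppPart z) (suppPart z')) : z = z' :=
  hz.2.2 z' hz'.1 hz'.2.1 (hN.le_of_mem_maxBelow hz.1 hz.2.1 hz' h)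

lemma IsLaminar.sSup_inf_eq (hN : IsLaminar N) {X : Set (Setoid (Fin m))} (hX : X ⊆ N)
    (hXx : sSup X ≤ x) {z : Setoid (Fin m)} (hz : z ∈ maxBelow N x) :
    sSup X ⊓ z = sSup {a ∈ X | a ≤ z} := by
  refine le_antisymm ((hN.mono hX).sSup_inf_le z |>.trans (sSup_le_sSup ?_))
    (le_inf (sSup_le_sSup (sep_subset _ _)) (sSup_le fun _ ha => ha.2))
  exact fun a ⟨ha, hdisj⟩ => ⟨ha, hN.le_of_mem_maxBelow (hX ha) ((le_sSup ha).trans hXx) hz hdisj⟩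

lemma IsLaminar.iSup_inf_eq (hN : IsLaminar N) {ι : Type*} {z : ι → Setoid (Fin m)}
    (hz : ∀ i, z i ∈ maxBelow N x) (hz_inj : Function.Injective z) {f : ι → Setoid (Fin m)}
    (hf : ∀ i, ∃ X ⊆ N, sSup X = f i) (hfz : ∀ i, f i ≤ z i) (i : ι) :
    (⨆ j, f j) ⊓ z i = f i := by
  choose X hXN hX using hf
  refine le_antisymm ?_ (le_inf (le_iSup f i) (hfz i))
  calc (⨆ j, f j) ⊓ z i = sSup (⋃ j, X j) ⊓ z i := by simp_rw [sSup_iUnion, hX]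
    _ ≤ sSup {a ∈ ⋃ j, X j | ¬Disjoint (suppPart a) (suppPart (z i))} :=
      (hN.mono (iUnion_subset hXN)).sSup_inf_le _
    _ ≤ sSup (X i) := sSup_le_sSup ?_
    _ = f i := hX i
  rintro a ⟨ha, hdisj⟩
  obtain ⟨j, haj⟩ := mem_iUnion.1 ha
  have haz : a ≤ z j := (le_sSup haj).trans ((hX j).trans_le (hfz j))
  obtain rfl : j = i := hz_inj <| hN.eq_of_mem_maxBelow (hz j) (hz i)
    fun h => hdisj (h.mono_left (suppPart_mono haz))
  exact haj

end Laminar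

theorem stmt9_general (k m : ℕ) (N : Set (Setoid (Fin m))) (hN : memN k m N)
    (hbot : (⊥ : Setoid (Fin m)) ∈ SigmaSet k m N) :
    ∀ x : SigmaSet k m N,
      ∃ φ : ((z : {z : SigmaSet k m N // (z : Setoid (Fin m)) ∈ maxBelow N (x : Setoid (Fin m))}) →
              Set.Icc (⟨⊥, hbot⟩ : SigmaSet k m N) z.1) ≃o
            Set.Icc (⟨⊥, hbot⟩ : SigmaSet k m N) x,
        ∀ f, ((φ f).val : Setoid (Fin m)) =
          sSup (Set.range fun z => ((f z).val : Setoid (Fin m))) := by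
  have hlam := isLaminar_of_memN hN
  have hmem (a) : a ∈ SigmaSet k m N ↔ ∃ X ⊆ N, sSup X = a := mem_SigmaSet_iff hN.1 hlam
  intro x
  refine exists_orderIso_pi_Icc_of_iSup_inf hbot Subtype.val x (fun i => i.2.2.1)
    (fun f hf => ?_) (fun f hf hfz => ?_) (fun y hy hyx i => ?_) (fun y hy hyx => ?_)
  · exact (hmem _).2 (exists_sSup_eq_iSup fun i => (hmem _).1 (hf i))
  · exact hlam.iSup_inf_eq (fun i => i.2) (Subtype.val_injective.comp Subtype.val_injective)
      (fun i => (hmem _).1 (hf i)) hfz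
  · obtain ⟨Y, hYN, rfl⟩ := (hmem y).1 hy
    rw [hlam.sSup_inf_eq hYN hyx i.2]
    exact (hmem _).2 ⟨_, (sep_subset _ _).trans hYN, rfl⟩
  · obtain ⟨Y, hYN, rfl⟩ := (hmem y).1 hy
    exact iSup_sSup_inf_eq hYN hyx fun w hw =>
      ⟨⟨⟨w, (hmem w).2 ⟨{w}, singleton_subset_iff.2 hw.1, sSup_singleton⟩⟩, hw⟩, rfl⟩

/-- `N` is a building set of the lattice `Σ(N)`: for every `x ∈ Σ(N)`,
the join map is a poset isomorphism from the product of the intervals `[⊥, z]` over the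
maximal elements `z` of `N` below `x` onto the interval `[⊥, x]` in `Σ(N)`. -/
theorem stmt9 (k m : ℕ) (hk : 1 ≤ k) (N : Set (Setoid (Fin m))) (hN : memN k m N)
    (hbot : (⊥ : Setoid (Fin m)) ∈ SigmaSet k m N) :
    ∀ x : SigmaSet k m N,
      ∃ φ : ((z : {z : SigmaSet k m N // (z : Setoid (Fin m)) ∈ maxBelow N (x : Setoid (Fin m))}) →
              Set.Icc (⟨⊥, hbot⟩ : SigmaSet k m N) z.1) ≃o
            Set.Icc (⟨⊥, hbot⟩ : SigmaSet k m N) x,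
        ∀ f, ((φ f).val : Setoid (Fin m)) =
          sSup (Set.range fun z => ((f z).val : Setoid (Fin m))) :=
  stmt9_general k m N hN hbot
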